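/- As z → ∞, I(z)/z⁵ → 48, where I(z) = ∫_{2/z}^∞ e^{-(x-2/z)}(1/x + 3/x² + 3/x³)(z²x² - 4)^{5/2} dx. -/

import Mathlib

noncomputable def Ifun (z : ℝ) : ℝ :=
  ∫ x in Set.Ici (2/z),
    Real.exp (-(x - 2/z)) * (1/x + 3/x^2 + 3/x^3) * (z^2 * x^2 - 4) ^ ((5:ℝ)/2)

open Real MeasureTheory Set Filter Topology

/-! Substituting `t = 2/z` gives `I(z)/z⁵ = ∫_{x>0} eᵗ e⁻ˣ (1/x + 3/x² + 3/x³) (x² - t²)^{5/2} dx`;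
the half-odd real power vanishes for `x < t`, so the integral may run over all `x > 0`. For
`|t| ≤ 1` the integrand is dominated by `e · e⁻ˣ (x⁴ + 3x³ + 3x²)`, so by dominated convergence the
integral is continuous at `t = 0`, where it equals `4! + 3·3! + 3·2! = 48`. -/

section HalfOddPower

variable (n : ℕ)

/- For `a < 0`, Mathlib's `a ^ y` is `exp (log a * y) * cos (y * π)`, which vanishes when `y` is
half an odd integer. -/
lemma Real.rpow_half_odd_eq_zero_of_nonpos {a : ℝ} (ha : a ≤ 0) :
    a ^ ((2 * n + 1 : ℝ) / 2) = 0 := by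
  rcases ha.lt_or_eq with ha | rfl
  · have hcos : cos ((2 * n + 1 : ℝ) / 2 * π) = 0 :=
      cos_eq_zero_iff.mpr ⟨n, by push_cast; ring⟩
    rw [rpow_def_of_neg ha, hcos, mul_zero]
  · exact zero_rpow (by positivity)

lemma Real.rpow_half_odd_nonneg (a : ℝ) : 0 ≤ a ^ ((2 * n + 1 : ℝ) / 2) := by
  rcases le_or_gt a 0 with ha | ha
  · rw [rpow_half_odd_eq_zero_of_nonpos n ha]
  · exact (rpow_pos_of_pos ha _).le

lemma Real.monotone_rpow_half_odd : Monotone fun a : ℝ => a ^ ((2 * n + 1 : ℝ) / 2) := by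
  intro a b hab
  rcases le_or_gt a 0 with ha | ha
  · simpa only [rpow_half_odd_eq_zero_of_nonpos n ha] using rpow_half_odd_nonneg n b
  · exact rpow_le_rpow ha.le hab (by positivity)

lemma Real.sq_rpow_half_odd {x : ℝ} (hx : 0 ≤ x) :
    (x ^ 2) ^ ((2 * n + 1 : ℝ) / 2) = x ^ (2 * n + 1) := by
  rw [← rpow_natCast x 2, ← rpow_mul hx, ← rpow_natCast]
  congr 1
  push_cast
  ring

end HalfOddPower

lemma integrableOn_exp_neg_mul_pow (n : ℕ) :
    IntegrableOn (fun x : ℝ => exp (-x) * x ^ n) (Ioi 0) := by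
  refine (GammaIntegral_convergent (s := n + 1) (by positivity)).congr_fun (fun x _ => ?_)
    measurableSet_Ioi
  simp only [add_sub_cancel_right, rpow_natCast]

lemma integral_exp_neg_mul_pow (n : ℕ) :
    ∫ x in Ioi (0:ℝ), exp (-x) * x ^ n = n.factorial := by
  rw [← Gamma_nat_eq_factorial, Gamma_eq_integral (by positivity)]
  refine setIntegral_congr_fun measurableSet_Ioi (fun x _ => ?_)
  rw [add_sub_cancel_right, rpow_natCast]

lemma integrableOn_exp_neg_mul_poly :
    IntegrableOn (fun x : ℝ => exp (-x) * (x ^ 4 + 3 * x ^ 3 + 3 * x ^ 2)) (Ioi 0) := by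
  have h := ((integrableOn_exp_neg_mul_pow 4).add
    ((integrableOn_exp_neg_mul_pow 3).const_mul 3)).add
    ((integrableOn_exp_neg_mul_pow 2).const_mul 3)
  exact h.congr_fun (fun x _ => by simp only [Pi.add_apply]; ring) measurableSet_Ioi

lemma integral_exp_neg_mul_poly :
    ∫ x in Ioi (0:ℝ), exp (-x) * (x ^ 4 + 3 * x ^ 3 + 3 * x ^ 2) = 48 := by
  have h4 := integrableOn_exp_neg_mul_pow 4
  have h3 := (integrableOn_exp_neg_mul_pow 3).const_mul 3
  have h2 := (integrableOn_exp_neg_mul_pow 2).const_mul 3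
  have hsplit : (fun x : ℝ => exp (-x) * (x ^ 4 + 3 * x ^ 3 + 3 * x ^ 2)) =
      fun x => exp (-x) * x ^ 4 + 3 * (exp (-x) * x ^ 3) + 3 * (exp (-x) * x ^ 2) := by
    ext x; ring
  rw [hsplit, integral_add ?_ h2, integral_add h4 h3, integral_const_mul,
    integral_const_mul, integral_exp_neg_mul_pow, integral_exp_neg_mul_pow,
    integral_exp_neg_mul_pow]
  · norm_num [Nat.factorial]
  · exact h4.add h3

lemma five_halves_eq : (5:ℝ) / 2 = (2 * (2:ℕ) + 1) / 2 := by norm_num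

noncomputable def scaledIntegrand (t x : ℝ) : ℝ :=
  exp t * (exp (-x) * (1/x + 3/x^2 + 3/x^3) * (x^2 - t^2) ^ ((5:ℝ)/2))

lemma scaledIntegrand_of_le_sq {t x : ℝ} (h : x ^ 2 ≤ t ^ 2) : scaledIntegrand t x = 0 := by
  rw [scaledIntegrand, five_halves_eq, rpow_half_odd_eq_zero_of_nonpos 2 (by linarith),
    mul_zero, mul_zero]

lemma scaledIntegrand_zero {x : ℝ} (hx : 0 < x) :
    scaledIntegrand 0 x = exp (-x) * (x ^ 4 + 3 * x ^ 3 + 3 * x ^ 2) := by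
  rw [scaledIntegrand, five_halves_eq, exp_zero, one_mul, zero_pow two_ne_zero, sub_zero,
    sq_rpow_half_odd 2 hx.le]
  field_simp

lemma continuous_scaledIntegrand_left (x : ℝ) : Continuous fun t => scaledIntegrand t x := by
  unfold scaledIntegrand
  fun_prop (disch := norm_num)

lemma abs_scaledIntegrand_le {t x : ℝ} (ht : |t| ≤ 1) (hx : 0 < x) :
    |scaledIntegrand t x| ≤ exp 1 * (exp (-x) * (x ^ 4 + 3 * x ^ 3 + 3 * x ^ 2)) := by
  have hpow : (x ^ 2 - t ^ 2) ^ ((5:ℝ)/2) ≤ x ^ 5 := by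
    rw [five_halves_eq, ← sq_rpow_half_odd 2 hx.le]
    exact monotone_rpow_half_odd 2 (by nlinarith [sq_nonneg t])
  have hnonneg : 0 ≤ (x ^ 2 - t ^ 2) ^ ((5:ℝ)/2) := five_halves_eq ▸ rpow_half_odd_nonneg 2 _
  rw [scaledIntegrand, abs_of_nonneg (by positivity)]
  calc exp t * (exp (-x) * (1/x + 3/x^2 + 3/x^3) * (x^2 - t^2) ^ ((5:ℝ)/2))
      ≤ exp 1 * (exp (-x) * (1/x + 3/x^2 + 3/x^3) * x ^ 5) := by
        gcongr
        exact (le_abs_self t).trans ht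
    _ = exp 1 * (exp (-x) * (x ^ 4 + 3 * x ^ 3 + 3 * x ^ 2)) := by field_simp

lemma Ifun_div_pow_five {z : ℝ} (hz : 0 < z) :
    Ifun z / z ^ 5 = ∫ x in Ioi 0, scaledIntegrand (2 / z) x := by
  have hsub : Ici (2 / z) ⊆ Ioi 0 := Ici_subset_Ioi.mpr (by positivity)
  rw [setIntegral_eq_of_subset_of_forall_sdiff_eq_zero measurableSet_Ioi hsub ?_, Ifun,
    ← integral_div]
  · refine setIntegral_congr_fun measurableSet_Ici (fun x (hx : 2 / z ≤ x) => ?_)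
    have hx0 : 0 < x := (by positivity : (0:ℝ) < 2 / z).trans_le hx
    have hfactor : z ^ 2 * x ^ 2 - 4 = z ^ 2 * (x ^ 2 - (2 / z) ^ 2) := by
      field_simp; ring
    have hbase : 0 ≤ x ^ 2 - (2 / z) ^ 2 :=
      sub_nonneg.mpr (pow_le_pow_left₀ (by positivity) hx 2)
    rw [scaledIntegrand, hfactor, mul_rpow (by positivity) hbase, five_halves_eq,
      sq_rpow_half_odd 2 hz.le, show -(x - 2 / z) = 2 / z + -x by ring, exp_add]
    field_simp
  · rintro x ⟨hx0 : 0 < x, hx : ¬2 / z ≤ x⟩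
    exact scaledIntegrand_of_le_sq (pow_le_pow_left₀ hx0.le (not_le.mp hx).le 2)

lemma tendsto_integral_scaledIntegrand :
    Tendsto (fun t => ∫ x in Ioi 0, scaledIntegrand t x) (𝓝 0) (𝓝 48) := by
  have hcont : ContinuousAt (fun t => ∫ x in Ioi 0, scaledIntegrand t x) 0 := by
    refine continuousAt_of_dominated
      (bound := fun x => exp 1 * (exp (-x) * (x ^ 4 + 3 * x ^ 3 + 3 * x ^ 2)))
      (Eventually.of_forall fun t => ?_) ?_ (integrableOn_exp_neg_mul_poly.const_mul _)
      (Eventually.of_forall fun x => (continuous_scaledIntegrand_left x).continuousAt)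
    · exact Measurable.aestronglyMeasurable (by unfold scaledIntegrand; fun_prop)
    · filter_upwards [Metric.closedBall_mem_nhds (0:ℝ) one_pos] with t ht
      filter_upwards [ae_restrict_mem measurableSet_Ioi] with x hx
      exact abs_scaledIntegrand_le (by simpa using ht) hx
  have hval : ∫ x in Ioi 0, scaledIntegrand 0 x = 48 := by
    rw [← integral_exp_neg_mul_poly]
    exact setIntegral_congr_fun measurableSet_Ioi fun _ hx => scaledIntegrand_zero hx
  simpa only [hval] using hcont.tendsto

theorem stmt12 :
    Filter.Tendsto (fun z : ℝ => Ifun z / z^5) Filter.atTop (nhds 48) := by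
  have h2z : Tendsto (fun z : ℝ => 2 / z) atTop (𝓝 0) := tendsto_const_nhds.div_atTop tendsto_id
  refine (tendsto_integral_scaledIntegrand.comp h2z).congr' ?_
  filter_upwards [eventually_gt_atTop 0] with z hz
  exact (Ifun_div_pow_five hz).symm
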